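/- Fix a point p ∈ S² and lengths α_1,...,α_j ∈ (0,π). The set of endpoints of all spherical polygonal paths starting at p with consecutive spherical edge lengths α_1,...,α_j is invariant under all rotations of S² fixing p, and is of the form {v ∈ S² : d(p,v) ∈ I} for some closed interval I ⊆ [0,π] (a spherical zone centered at p). -/

import Mathlib

open Real
open scoped RealInnerProductSpace

/-- The spherical (geodesic) distance between unit vectors. -/
noncomputable def sdist (u v : EuclideanSpace ℝ (Fin 3)) : ℝ :=
  Real.arccos ⟪u, v⟫

/-!
Adding an edge of length `β` to paths whose endpoints fill the zone `d(p, ·) ∈ [a, b]` yields the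
unit vectors `w` with `d(p, w)` in the union over `t ∈ [a, b]` of the intervals
`[|t - β|, π - |t + β - π|]`: these are exactly the possible third sides of a spherical triangle
with sides `t` and `β`. Necessity is the triangle inequality for angles, applied to `p, u, w` and
to `p, -u, w`; sufficiency comes from the intermediate value theorem on the circle of radius `t`
about `p`. A union of a continuous family of nonempty closed intervals indexed by a compact
interval is again a closed interval, so induction on the number of edges shows that the endpoints
form a zone, and zones centered at `p` are invariant under the isometries fixing `p`.
-/

open InnerProductGeometry Set Module

def thirdSideRange (t β : ℝ) : Set ℝ := Icc |t - β| (π - |t + β - π|)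

lemma mem_thirdSideRange_iff {t β s : ℝ} :
    s ∈ thirdSideRange t β ↔ t - β ≤ s ∧ β - t ≤ s ∧ s ≤ t + β ∧ s + t + β ≤ 2 * π := by
  rw [thirdSideRange, mem_Icc, abs_sub_le_iff, le_sub_comm, abs_le]
  constructor
  · rintro ⟨⟨h₁, h₂⟩, h₃, h₄⟩
    refine ⟨h₁, h₂, ?_, ?_⟩ <;> linarith
  · rintro ⟨h₁, h₂, h₃, h₄⟩
    exact ⟨⟨h₁, h₂⟩, by linarith, by linarith⟩

lemma mem_thirdSideRange_comm {t β s : ℝ} :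
    s ∈ thirdSideRange t β ↔ β ∈ thirdSideRange t s := by
  simp only [mem_thirdSideRange_iff]
  constructor <;> rintro ⟨h₁, h₂, h₃, h₄⟩ <;> refine ⟨?_, ?_, ?_, ?_⟩ <;> linarith

lemma thirdSideRange_nonempty {t β : ℝ} (ht : t ∈ Icc 0 π) (hβ : β ∈ Icc 0 π) :
    (thirdSideRange t β).Nonempty := by
  refine nonempty_Icc.2 ?_
  obtain ⟨ht₀, htπ⟩ := ht
  obtain ⟨hβ₀, hβπ⟩ := hβ
  rcases abs_cases (t - β) with ⟨h₁, -⟩ | ⟨h₁, -⟩ <;>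
    rcases abs_cases (t + β - π) with ⟨h₂, -⟩ | ⟨h₂, -⟩ <;> linarith

lemma cos_mem_Icc_of_mem_thirdSideRange {t s β : ℝ} (hβ : β ∈ Icc 0 π)
    (h : s ∈ thirdSideRange t β) : cos β ∈ Icc (cos (t + s)) (cos (t - s)) := by
  obtain ⟨h₁, h₂⟩ := mem_thirdSideRange_comm.1 h
  constructor
  · have := cos_le_cos_of_nonneg_of_le_pi hβ.1 (sub_le_self π (abs_nonneg _)) h₂
    rwa [cos_pi_sub, cos_abs, cos_sub_pi, neg_neg] at this
  · rw [← cos_abs (t - s)]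
    exact cos_le_cos_of_nonneg_of_le_pi (abs_nonneg _) hβ.2 h₁

section InnerProductSpace

variable {V : Type*} [NormedAddCommGroup V] [InnerProductSpace ℝ V]

theorem angle_mem_thirdSideRange (x y z : V) :
    angle x z ∈ thirdSideRange (angle x y) (angle y z) := by
  have h₁ := angle_le_angle_add_angle x y z
  have h₂ := angle_le_angle_add_angle x z y
  have h₃ := angle_le_angle_add_angle y x z
  have h₄ := angle_le_angle_add_angle x (-y) z
  rw [angle_neg_right, angle_neg_left] at h₄
  rw [angle_comm z y] at h₂
  rw [angle_comm y x] at h₃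
  rw [mem_thirdSideRange_iff]
  refine ⟨?_, ?_, ?_, ?_⟩ <;> linarith

lemma angle_eq_of_inner_eq_cos {x y : V} (hx : ‖x‖ = 1) (hy : ‖y‖ = 1) {t : ℝ}
    (h : ⟪x, y⟫ = cos t) (ht : t ∈ Icc 0 π) : angle x y = t := by
  rw [angle, h, hx, hy, mul_one, div_one, arccos_cos ht.1 ht.2]

lemma norm_cos_smul_add_sin_smul {x v : V} (hx : ‖x‖ = 1) (hv : ‖v‖ = 1) (hxv : ⟪x, v⟫ = 0)
    (θ : ℝ) : ‖cos θ • x + sin θ • v‖ = 1 := by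
  have h := norm_add_sq_eq_norm_sq_add_norm_sq_real
    (by rw [real_inner_smul_left, real_inner_smul_right, hxv, mul_zero, mul_zero] :
      ⟪cos θ • x, sin θ • v⟫ = 0)
  rw [norm_smul, norm_smul, hx, hv, mul_one, mul_one, Real.norm_eq_abs, Real.norm_eq_abs,
    abs_mul_abs_self, abs_mul_abs_self, ← sq, ← sq, ← sq, cos_sq_add_sin_sq] at h
  exact (pow_eq_one_iff_of_nonneg (norm_nonneg _) two_ne_zero).1 h

lemma exists_norm_eq_one_forall_inner_eq_zero [FiniteDimensional ℝ V] {ι : Type*} [Fintype ι]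
    (v : ι → V) (h : Fintype.card ι < finrank ℝ V) : ∃ e : V, ‖e‖ = 1 ∧ ∀ i, ⟪v i, e⟫ = 0 := by
  let f : V →ₗ[ℝ] ι → ℝ := LinearMap.pi fun i => innerₗ V (v i)
  obtain ⟨e, he, he₀⟩ := Submodule.exists_mem_ne_zero_of_ne_bot
    (LinearMap.ker_ne_bot_of_finrank_lt (f := f) (by simpa using h))
  refine ⟨NormedSpace.normalize e, NormedSpace.norm_normalize_eq_one_iff.2 he₀, fun i => ?_⟩
  have : ⟪v i, e⟫ = 0 := congr_fun he i
  rw [NormedSpace.normalize, real_inner_smul_right, this, mul_zero]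

lemma exists_eq_cos_smul_add_sin_smul [FiniteDimensional ℝ V] (hV : 1 < finrank ℝ V) {x z : V}
    (hx : ‖x‖ = 1) (hz : ‖z‖ = 1) :
    ∃ e : V, ‖e‖ = 1 ∧ ⟪x, e⟫ = 0 ∧ z = cos (angle x z) • x + sin (angle x z) • e := by
  set r := z - ⟪x, z⟫ • x with hr
  have hxr : ⟪x, r⟫ = 0 := by
    rw [hr, inner_sub_right, real_inner_smul_right, real_inner_self_eq_norm_sq, hx]
    ring
  have hr_norm : ‖r‖ = sin (angle x z) := by
    have h := norm_add_sq_eq_norm_sq_add_norm_sq_real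
      (by rw [real_inner_smul_left, hxr, mul_zero] : ⟪⟪x, z⟫ • x, r⟫ = 0)
    rw [hr, add_sub_cancel, hz, norm_smul, hx, Real.norm_eq_abs] at h
    simp only [mul_one, abs_mul_abs_self] at h
    rw [← sq_eq_sq₀ (norm_nonneg _) (sin_angle_nonneg _ _), sin_sq,
      ← inner_eq_cos_angle_of_norm_eq_one hx hz]
    linarith
  obtain ⟨e, he, hxe, hre⟩ : ∃ e : V, ‖e‖ = 1 ∧ ⟪x, e⟫ = 0 ∧ ‖r‖ • e = r := by
    by_cases h : r = 0
    · obtain ⟨e, he, hxe⟩ := exists_norm_eq_one_forall_inner_eq_zero ![x] (by simpa using hV)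
      exact ⟨e, he, hxe 0, by simp [h]⟩
    · refine ⟨NormedSpace.normalize r, NormedSpace.norm_normalize_eq_one_iff.2 h, ?_,
        NormedSpace.norm_smul_normalize r⟩
      rw [NormedSpace.normalize, real_inner_smul_right, hxr, mul_zero]
  refine ⟨e, he, hxe, ?_⟩
  rw [← inner_eq_cos_angle_of_norm_eq_one hx hz, ← hr_norm, hre, hr, add_sub_cancel]

theorem exists_norm_eq_one_angle_eq_angle_eq [FiniteDimensional ℝ V] (hV : 2 < finrank ℝ V)
    {x z : V} (hx : ‖x‖ = 1) (hz : ‖z‖ = 1) {t β : ℝ} (ht : t ∈ Icc 0 π) (hβ : β ∈ Icc 0 π)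
    (h : angle x z ∈ thirdSideRange t β) : ∃ y : V, ‖y‖ = 1 ∧ angle x y = t ∧ angle y z = β := by
  obtain ⟨e, he, hxe, hz_eq⟩ := exists_eq_cos_smul_add_sin_smul (by omega) hx hz
  set s := angle x z
  obtain ⟨e', he', hperp⟩ := exists_norm_eq_one_forall_inner_eq_zero ![x, e] (by simpa using hV)
  have hxe' : ⟪x, e'⟫ = 0 := hperp 0
  have hee' : ⟪e, e'⟫ = 0 := hperp 1
  -- `y φ` runs over the circle of radius `t` about `x`; `φ = 0` is its point nearest to `z`.
  let y : ℝ → V := fun φ => cos t • x + sin t • (cos φ • e + sin φ • e')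
  have hy : ∀ φ, ‖y φ‖ = 1 := fun φ =>
    norm_cos_smul_add_sin_smul hx (norm_cos_smul_add_sin_smul he he' hee' φ)
      (by rw [inner_add_right, real_inner_smul_right, real_inner_smul_right, hxe, hxe']; ring) t
  have hxy : ∀ φ, ⟪x, y φ⟫ = cos t := by
    intro φ
    simp only [y, inner_add_right, real_inner_smul_right, inner_self_eq_one_of_norm_eq_one hx,
      hxe, hxe']
    ring
  have hyz : ∀ φ, ⟪y φ, z⟫ = cos t * cos s + sin t * sin s * cos φ := by
    intro φ
    rw [hz_eq]
    simp only [y, inner_add_left, inner_add_right, real_inner_smul_left, real_inner_smul_right,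
      inner_self_eq_one_of_norm_eq_one hx, inner_self_eq_one_of_norm_eq_one he,
      real_inner_comm x e, real_inner_comm x e', real_inner_comm e e', hxe, hxe', hee']
    ring
  obtain ⟨φ, -, hφ⟩ : cos β ∈ (fun φ => cos t * cos s + sin t * sin s * cos φ) '' Icc 0 π := by
    refine intermediate_value_Icc' pi_pos.le (by fun_prop) ?_
    simpa [cos_add, cos_sub, sub_eq_add_neg] using cos_mem_Icc_of_mem_thirdSideRange hβ h
  exact ⟨y φ, hy φ, angle_eq_of_inner_eq_cos hx (hy φ) (hxy φ) ht,
    angle_eq_of_inner_eq_cos (hy φ) hz ((hyz φ).trans hφ) hβ⟩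

end InnerProductSpace

theorem IsCompact.exists_biUnion_Icc_eq_Icc {X : Type*} [TopologicalSpace X] {K : Set X}
    (hK : IsCompact K) (hK' : IsConnected K) {f g : X → ℝ} (hf : ContinuousOn f K)
    (hg : ContinuousOn g K) (hfg : ∀ x ∈ K, f x ≤ g x) :
    ∃ x₁ ∈ K, ∃ x₂ ∈ K, f x₁ ≤ g x₂ ∧ ⋃ x ∈ K, Icc (f x) (g x) = Icc (f x₁) (g x₂) := by
  obtain ⟨x₁, hx₁, hf_min⟩ := hK.exists_isMinOn hK'.nonempty hf
  obtain ⟨x₂, hx₂, hg_max⟩ := hK.exists_isMaxOn hK'.nonempty hg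
  refine ⟨x₁, hx₁, x₂, hx₂, (hf_min hx₂).trans (hfg x₂ hx₂), ?_⟩
  apply (iUnion₂_subset fun x hx => Icc_subset_Icc (hf_min hx) (hg_max hx)).antisymm
  intro c ⟨hc₁, hc₂⟩
  rw [mem_iUnion₂]
  by_cases hc : f x₂ ≤ c
  · exact ⟨x₂, hx₂, hc, hc₂⟩
  · obtain ⟨x, hx, rfl⟩ :=
      hK'.isPreconnected.intermediate_value hx₁ hx₂ hf ⟨hc₁, (not_le.1 hc).le⟩
    exact ⟨x, hx, le_rfl, hfg x hx⟩

local notation "ℝ³" => EuclideanSpace ℝ (Fin 3)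

lemma sdist_eq_angle {u v : ℝ³} (hu : ‖u‖ = 1) (hv : ‖v‖ = 1) : sdist u v = angle u v := by
  rw [sdist, angle, hu, hv, mul_one, div_one]

lemma sdist_map (R : ℝ³ ≃ₗᵢ[ℝ] ℝ³) (u v : ℝ³) : sdist (R u) (R v) = sdist u v := by
  rw [sdist, sdist, LinearIsometryEquiv.inner_map_map]

lemma sdist_eq_zero_iff {u v : ℝ³} (hu : ‖u‖ = 1) (hv : ‖v‖ = 1) : sdist u v = 0 ↔ u = v := by
  have h := real_inner_le_norm u v
  rw [hu, hv, mul_one] at h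
  rw [sdist, arccos_eq_zero, ← inner_eq_one_iff_of_norm_eq_one (𝕜 := ℝ) hu hv]
  exact ⟨h.antisymm, ge_of_eq⟩

def sphericalZone (p : ℝ³) (I : Set ℝ) : Set ℝ³ := {w | ‖w‖ = 1 ∧ sdist p w ∈ I}

lemma image_sphericalZone {p : ℝ³} {R : ℝ³ ≃ₗᵢ[ℝ] ℝ³} (hR : R p = p) (I : Set ℝ) :
    R '' sphericalZone p I = sphericalZone p I := by
  have hsymm : R.symm p = p := by rw [← hR, LinearIsometryEquiv.symm_apply_apply, hR]
  ext w
  have h := sdist_map R.symm p w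
  rw [hsymm] at h
  simp only [LinearIsometryEquiv.image_eq_preimage_symm, sphericalZone, mem_preimage,
    mem_ofPred_eq, LinearIsometryEquiv.norm_map, h]

lemma setOf_exists_sdist_eq_sphericalZone {p : ℝ³} (hp : ‖p‖ = 1) {β : ℝ} (hβ : β ∈ Icc 0 π)
    {I : Set ℝ} (hI : I ⊆ Icc 0 π) :
    {w | ‖w‖ = 1 ∧ ∃ u ∈ sphericalZone p I, sdist u w = β} =
      sphericalZone p (⋃ t ∈ I, thirdSideRange t β) := by
  ext w
  simp only [sphericalZone, mem_ofPred_eq, mem_iUnion₂]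
  refine and_congr_right fun hw => ⟨?_, ?_⟩
  · rintro ⟨u, ⟨hu, ht⟩, rfl⟩
    refine ⟨_, ht, ?_⟩
    rw [sdist_eq_angle hp hw, sdist_eq_angle hp hu, sdist_eq_angle hu hw]
    exact angle_mem_thirdSideRange p u w
  · rintro ⟨t, ht, h⟩
    rw [sdist_eq_angle hp hw] at h
    obtain ⟨u, hu, rfl, rfl⟩ := exists_norm_eq_one_angle_eq_angle_eq
      (by simp) hp hw (hI ht) hβ h
    exact ⟨u, ⟨hu, by rwa [sdist_eq_angle hp hu]⟩, sdist_eq_angle hu hw⟩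

def pathEndpoints (p : ℝ³) {j : ℕ} (α : Fin j → ℝ) : Set ℝ³ :=
  {w | ∃ f : Fin (j + 1) → ℝ³, f 0 = p ∧ (∀ k : Fin (j + 1), ‖f k‖ = 1) ∧
    (∀ k : Fin j, sdist (f k.castSucc) (f k.succ) = α k) ∧ f (Fin.last j) = w}

lemma pathEndpoints_zero {p : ℝ³} (hp : ‖p‖ = 1) (α : Fin 0 → ℝ) :
    pathEndpoints p α = sphericalZone p (Icc 0 0) := by
  ext w
  simp only [pathEndpoints, sphericalZone, Icc_self, mem_ofPred_eq, mem_singleton_iff]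
  constructor
  · rintro ⟨f, hf0, -, -, rfl⟩
    exact ⟨hf0 ▸ hp, hf0 ▸ (sdist_eq_zero_iff hp hp).2 rfl⟩
  · rintro ⟨hw, h⟩
    exact ⟨fun _ => p, rfl, fun _ => hp, fun k => k.elim0, (sdist_eq_zero_iff hp hw).1 h⟩

lemma pathEndpoints_succ (p : ℝ³) {j : ℕ} (α : Fin (j + 1) → ℝ) :
    pathEndpoints p α =
      {w | ‖w‖ = 1 ∧ ∃ u ∈ pathEndpoints p (Fin.init α), sdist u w = α (Fin.last j)} := by
  ext w
  constructor
  · rintro ⟨f, hf0, hf, hfα, rfl⟩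
    exact ⟨hf _, Fin.init f (Fin.last j),
      ⟨Fin.init f, hf0, fun k => hf _, fun k => hfα k.castSucc, rfl⟩, hfα (Fin.last j)⟩
  · rintro ⟨hw, u, ⟨g, hg0, hg, hgα, rfl⟩, hgw⟩
    refine ⟨Fin.snoc g w, hg0, Fin.lastCases ?_ ?_, Fin.lastCases ?_ ?_, Fin.snoc_last _ _⟩
    · rwa [Fin.snoc_last]
    · intro k
      rw [Fin.snoc_castSucc]
      exact hg k
    · rwa [Fin.succ_last, Fin.snoc_last, Fin.snoc_castSucc]
    · intro k
      rw [Fin.succ_castSucc, Fin.snoc_castSucc, Fin.snoc_castSucc]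
      exact hgα k

theorem exists_pathEndpoints_eq_sphericalZone {p : ℝ³} (hp : ‖p‖ = 1) :
    ∀ {j : ℕ} (α : Fin j → ℝ), (∀ k, α k ∈ Icc 0 π) →
      ∃ a b, 0 ≤ a ∧ a ≤ b ∧ b ≤ π ∧ pathEndpoints p α = sphericalZone p (Icc a b)
  | 0, α, _ => ⟨0, 0, le_rfl, le_rfl, pi_pos.le, pathEndpoints_zero hp α⟩
  | j + 1, α, hα => by
    obtain ⟨a, b, ha, hab, hb, h⟩ :=
      exists_pathEndpoints_eq_sphericalZone hp (Fin.init α) fun k => hα _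
    set β := α (Fin.last j)
    obtain ⟨t₁, -, t₂, -, hle, hU⟩ := isCompact_Icc.exists_biUnion_Icc_eq_Icc
      (isConnected_Icc hab) (f := fun t => |t - β|) (g := fun t => π - |t + β - π|)
      (by fun_prop) (by fun_prop)
      fun t ht => nonempty_Icc.1 (thirdSideRange_nonempty ⟨ha.trans ht.1, ht.2.trans hb⟩ (hα _))
    refine ⟨_, _, abs_nonneg _, hle, sub_le_self _ (abs_nonneg _), ?_⟩
    rw [pathEndpoints_succ, h,
      setOf_exists_sdist_eq_sphericalZone hp (hα _) (Icc_subset_Icc ha hb)]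
    exact congrArg _ hU

/-- Let `S` be the set of endpoints of all spherical polygonal paths on the unit sphere
starting at a unit vector `p` with consecutive spherical edge lengths
`α 1, …, α j ∈ (0,π)`. Then `S` is invariant under every rotation (linear isometry) of
the sphere fixing `p`, and `S` is a spherical zone centered at `p`: the set of unit
vectors whose spherical distance to `p` lies in some closed interval `I ⊆ [0,π]`. -/
theorem endpoint_set_is_spherical_zone {j : ℕ}
    (p : EuclideanSpace ℝ (Fin 3)) (hp : ‖p‖ = 1)
    (α : Fin j → ℝ) (hα : ∀ k : Fin j, α k ∈ Set.Ioo 0 π)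
    (S : Set (EuclideanSpace ℝ (Fin 3)))
    (hS : S = {w | ∃ f : Fin (j + 1) → EuclideanSpace ℝ (Fin 3),
      f 0 = p ∧ (∀ k : Fin (j + 1), ‖f k‖ = 1) ∧
      (∀ k : Fin j, sdist (f k.castSucc) (f k.succ) = α k) ∧
      f (Fin.last j) = w}) :
    (∀ R : EuclideanSpace ℝ (Fin 3) ≃ₗᵢ[ℝ] EuclideanSpace ℝ (Fin 3),
        R p = p → R '' S = S) ∧
    ∃ a b : ℝ, 0 ≤ a ∧ b ≤ π ∧
      S = {w | ‖w‖ = 1 ∧ sdist p w ∈ Set.Icc a b} := by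
  obtain ⟨a, b, ha, -, hb, hzone⟩ :=
    exists_pathEndpoints_eq_sphericalZone hp α fun k => Ioo_subset_Icc_self (hα k)
  replace hS : S = sphericalZone p (Icc a b) := hS.trans hzone
  subst hS
  exact ⟨fun R hR => image_sphericalZone hR _, a, b, ha, hb, rfl⟩
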